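/- arXiv:1904.01913 — 2 statements merged into one kernel-verified Lean document; each statement's English description precedes it below -/
import Mathlib

section
/- Let P = (E, ρ) be a (q,m)-polymatroid of rank K = ρ(E), and for 0 ≤ x ≤ n define h(x) = max{ν(X) : X ∈ Σ(E), dim X = x} and h*(x) = max{ν*(X) : X ∈ Σ(E), dim X = x}. Fix a positive integer x ≤ n. Then h*(x−1) ≤ h*(x), and for 1 ≤ r ≤ K one has x = d_r(P) if and only if h*(x−1) < r ≤ h*(x). Also h(x−1) ≤ h(x), and for 1 ≤ s ≤ mn − K one has x = d_s(P*) if and only if h(x−1) < s ≤ h(x). -/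
set_option linter.unusedSectionVars false

open Module Matrix

variable {F : Type*} [Field F] [Fintype F] {n : ℕ}

/-- The orthogonal complement of a subspace of `𝔽_q^n` with respect to the standard dot product. -/
def perp (X : Submodule F (Fin n → F)) : Submodule F (Fin n → F) where
  carrier := {x | ∀ y ∈ X, dotProduct x y = 0}
  add_mem' := fun {a b} ha hb y hy => by
    rw [Set.mem_setOf_eq] at *
    rw [add_dotProduct, ha y hy, hb y hy, add_zero]
  zero_mem' := fun y hy => zero_dotProduct y
  smul_mem' := fun c a ha y hy => by
    rw [Set.mem_setOf_eq] at *
    rw [smul_dotProduct, ha y hy, smul_zero]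

/-- The dual rank function `ρ*(X) = ρ(X^⊥) + m·dim X − ρ(E)`. -/
noncomputable def dualRho (m : ℕ) (rho : Submodule F (Fin n → F) → ℤ) (X : Submodule F (Fin n → F)) : ℤ :=
  rho (perp X) + (m : ℤ) * (finrank F X : ℤ) - rho ⊤

/-- The nullity function `ν(X) = m·dim X − ρ(X)`. -/
noncomputable def nullity (m : ℕ) (rho : Submodule F (Fin n → F) → ℤ) (X : Submodule F (Fin n → F)) : ℤ :=
  (m : ℤ) * (finrank F X : ℤ) - rho X

/-- The conullity function `ν*(X) = ρ(E) − ρ(X^⊥)`. -/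
def coNull (rho : Submodule F (Fin n → F) → ℤ) (X : Submodule F (Fin n → F)) : ℤ :=
  rho ⊤ - rho (perp X)

/-- The `r`-th generalized weight `d_r = min{dim X : ν*(X) ≥ r}`. -/
noncomputable def genW (rho : Submodule F (Fin n → F) → ℤ) (r : ℤ) : ℕ :=
  sInf {d : ℕ | ∃ X : Submodule F (Fin n → F), finrank F X = d ∧ r ≤ coNull rho X}

/-- `h(x) = max{ν(X) : dim X = x}`. -/
noncomputable def hFun (m : ℕ) (rho : Submodule F (Fin n → F) → ℤ) (x : ℕ) : ℤ :=
  sSup {v : ℤ | ∃ X : Submodule F (Fin n → F), finrank F X = x ∧ v = nullity m rho X}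

/-- `h*(x) = max{ν*(X) : dim X = x}`. -/
noncomputable def hStar (rho : Submodule F (Fin n → F) → ℤ) (x : ℕ) : ℤ :=
  sSup {v : ℤ | ∃ X : Submodule F (Fin n → F), finrank F X = x ∧ v = coNull rho X}

/-- A `(q,m)`-polymatroid on `E = 𝔽_q^n`. -/
structure QMPolymatroid (F : Type*) [Field F] [Fintype F] (n m : ℕ) where
  rho : Submodule F (Fin n → F) → ℤ
  rho_nonneg : ∀ X, 0 ≤ rho X
  rho_le : ∀ X, rho X ≤ (m : ℤ) * (finrank F X : ℤ)
  rho_mono : ∀ ⦃X Y⦄, X ≤ Y → rho X ≤ rho Y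
  rho_submodular : ∀ X Y, rho (X ⊔ Y) + rho (X ⊓ Y) ≤ rho X + rho Y

/-- A `(q,m)`-demi-polymatroid on `E = 𝔽_q^n`. -/
structure QMDemiPolymatroid (F : Type*) [Field F] [Fintype F] (n m : ℕ) where
  rho : Submodule F (Fin n → F) → ℤ
  rho_nonneg : ∀ X, 0 ≤ rho X
  rho_le : ∀ X, rho X ≤ (m : ℤ) * (finrank F X : ℤ)
  rho_mono : ∀ ⦃X Y⦄, X ≤ Y → rho X ≤ rho Y
  dual_nonneg : ∀ X, 0 ≤ dualRho m rho X
  dual_le : ∀ X, dualRho m rho X ≤ (m : ℤ) * (finrank F X : ℤ)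
  dual_mono : ∀ ⦃X Y⦄, X ≤ Y → dualRho m rho X ≤ dualRho m rho Y

section Codes

variable {m : ℕ}

/-- The row space of a matrix. -/
def rowSpace (A : Matrix (Fin m) (Fin n) F) : Submodule F (Fin n → F) :=
  Submodule.span F (Set.range A)

theorem rowSpace_le_iff (A : Matrix (Fin m) (Fin n) F) (X : Submodule F (Fin n → F)) :
    rowSpace A ≤ X ↔ ∀ i, A i ∈ X := by
  rw [rowSpace, Submodule.span_le]; exact Set.range_subset_iff

/-- Matrices whose row space is contained in `X`. -/
def supportedOn (m : ℕ) (X : Submodule F (Fin n → F)) :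
    Submodule F (Matrix (Fin m) (Fin n) F) where
  carrier := {A | rowSpace A ≤ X}
  add_mem' := fun {A B} hA hB => by
    rw [Set.mem_setOf_eq, rowSpace_le_iff] at *
    exact fun i => X.add_mem (hA i) (hB i)
  zero_mem' := by
    rw [Set.mem_setOf_eq, rowSpace_le_iff]
    exact fun i => X.zero_mem
  smul_mem' := fun c A hA => by
    rw [Set.mem_setOf_eq, rowSpace_le_iff] at *
    exact fun i => X.smul_mem c (hA i)

/-- `C(X)`: the subspace of a Delsarte code `C` of matrices whose row space lies in `X`. -/
def subcode (C : Submodule F (Matrix (Fin m) (Fin n) F)) (X : Submodule F (Fin n → F)) :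
    Submodule F (Matrix (Fin m) (Fin n) F) :=
  C ⊓ supportedOn m X

/-- The rank function `ρ_C(X) = dim C − dim C(X^⊥)` of a Delsarte code. -/
noncomputable def rhoC (C : Submodule F (Matrix (Fin m) (Fin n) F))
    (X : Submodule F (Fin n → F)) : ℤ :=
  (finrank F C : ℤ) - (finrank F (subcode C (perp X)) : ℤ)

/-- The generalized weight `d_r(C) = min{dim X : dim C(X) ≥ r}` of a Delsarte code. -/
noncomputable def codeWeight (C : Submodule F (Matrix (Fin m) (Fin n) F)) (r : ℤ) : ℕ :=
  sInf {d : ℕ | ∃ X : Submodule F (Fin n → F),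
    finrank F X = d ∧ r ≤ (finrank F (subcode C X) : ℤ)}

/-- The trace dual of a Delsarte code. -/
def traceDual (C : Submodule F (Matrix (Fin m) (Fin n) F)) :
    Submodule F (Matrix (Fin m) (Fin n) F) where
  carrier := {N | ∀ M ∈ C, Matrix.trace (M * Nᵀ) = 0}
  add_mem' := fun {N₁ N₂} h1 h2 M hM => by
    rw [Matrix.transpose_add, Matrix.mul_add, Matrix.trace_add, h1 M hM, h2 M hM, add_zero]
  zero_mem' := fun M hM => by simp
  smul_mem' := fun c N hN M hM => by
    rw [Matrix.transpose_smul, Matrix.mul_smul, Matrix.trace_smul, hN M hM, smul_zero]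

/-- The transposed code `Cᵀ = {Mᵗ : M ∈ C}` of a code of square matrices. -/
def transposeCode (C : Submodule F (Matrix (Fin n) (Fin n) F)) :
    Submodule F (Matrix (Fin n) (Fin n) F) where
  carrier := {A | Aᵀ ∈ C}
  add_mem' := fun {A B} hA hB => by
    rw [Set.mem_setOf_eq, Matrix.transpose_add]; exact C.add_mem hA hB
  zero_mem' := by
    rw [Set.mem_setOf_eq, Matrix.transpose_zero]; exact C.zero_mem
  smul_mem' := fun c A hA => by
    rw [Set.mem_setOf_eq, Matrix.transpose_smul]; exact C.smul_mem c hA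

/-- The maximum rank of a matrix in a subspace of matrices. -/
noncomputable def maxrank (A : Submodule F (Matrix (Fin m) (Fin n) F)) : ℕ :=
  sSup {r : ℕ | ∃ M ∈ A, M.rank = r}

/-- An optimal anticode: a subspace `𝒜` of `𝕄` with `dim 𝒜 = m · maxrank 𝒜`. -/
def IsOptimalAnticode (A : Submodule F (Matrix (Fin m) (Fin n) F)) : Prop :=
  finrank F A = m * maxrank A

/-- Ravagnani's generalized weight `a_r(C)`. -/
noncomputable def aWeight (C : Submodule F (Matrix (Fin m) (Fin n) F)) (r : ℤ) : ℕ :=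
  (sInf {d : ℕ | ∃ A : Submodule F (Matrix (Fin m) (Fin n) F),
    IsOptimalAnticode A ∧ finrank F A = d ∧ r ≤ (finrank F (A ⊓ C : Submodule F _) : ℤ)}) / m

end Codes

/-!
Both conullity `ν*` and nullity `ν` are monotone on subspaces, and the conullity of `P*` is
the nullity of `P`, so both halves are one statement about a monotone `f`. For such `f`,
extending a subspace of minimal dimension with `f ≥ r` shows
`d_r ≤ y ↔ r ≤ max{f X : dim X = y}`; then `x = d_r` means `d_r ≤ x` but not `d_r ≤ x - 1`.
-/

namespace Submodule

variable {K V : Type*} [Field K] [AddCommGroup V] [Module K V] [FiniteDimensional K V]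

theorem exists_le_finrank_eq (X : Submodule K V) {k : ℕ} (hXk : finrank K X ≤ k)
    (hk : k ≤ finrank K V) : ∃ Y : Submodule K V, X ≤ Y ∧ finrank K Y = k := by
  induction k, hXk using Nat.le_induction with
  | base => exact ⟨X, le_rfl, rfl⟩
  | succ k _ ih =>
    obtain ⟨Y, hXY, hY⟩ := ih (by omega)
    have hY_ne_top : Y ≠ ⊤ := fun h => by rw [h, finrank_top] at hY; omega
    obtain ⟨v, -, hvY⟩ := SetLike.exists_of_lt hY_ne_top.lt_top
    exact ⟨Y ⊔ K ∙ v, hXY.trans le_sup_left, by rw [finrank_sup_span_singleton hvY, hY]⟩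

end Submodule

section GradedExtrema

variable {K V : Type*} [Field K] [AddCommGroup V] [Module K V] [FiniteDimensional K V]
  {f : Submodule K V → ℤ}

/-- For `x > finrank K V` the set is empty and `sSup ∅ = 0` in `ℤ`. -/
noncomputable def maxOfDim (f : Submodule K V → ℤ) (x : ℕ) : ℤ :=
  sSup {v : ℤ | ∃ X : Submodule K V, finrank K X = x ∧ v = f X}

noncomputable def minDimGe (f : Submodule K V → ℤ) (r : ℤ) : ℕ :=
  sInf {d : ℕ | ∃ X : Submodule K V, finrank K X = d ∧ r ≤ f X}

theorem le_maxOfDim_iff (hf : Monotone f) {x : ℕ} (hx : x ≤ finrank K V) {r : ℤ} :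
    r ≤ maxOfDim f x ↔ ∃ X : Submodule K V, finrank K X = x ∧ r ≤ f X := by
  obtain ⟨X₀, -, hX₀⟩ := (⊥ : Submodule K V).exists_le_finrank_eq (by simp) hx
  have hne : {v : ℤ | ∃ X : Submodule K V, finrank K X = x ∧ v = f X}.Nonempty :=
    ⟨f X₀, X₀, hX₀, rfl⟩
  have hbdd : BddAbove {v : ℤ | ∃ X : Submodule K V, finrank K X = x ∧ v = f X} :=
    ⟨f ⊤, by rintro v ⟨X, -, rfl⟩; exact hf le_top⟩
  constructor
  · intro hr
    obtain ⟨X, hX, hmax⟩ := Int.csSup_mem hne hbdd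
    exact ⟨X, hX, hmax ▸ hr⟩
  · rintro ⟨X, hX, hr⟩
    exact hr.trans (le_csSup hbdd ⟨X, hX, rfl⟩)

theorem maxOfDim_mono (hf : Monotone f) {x y : ℕ} (hxy : x ≤ y) (hy : y ≤ finrank K V) :
    maxOfDim f x ≤ maxOfDim f y := by
  obtain ⟨X, hX, hfX⟩ := (le_maxOfDim_iff hf (hxy.trans hy)).mp le_rfl
  obtain ⟨Y, hXY, hY⟩ := X.exists_le_finrank_eq (hX ▸ hxy) hy
  exact (le_maxOfDim_iff hf hy).mpr ⟨Y, hY, hfX.trans (hf hXY)⟩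

theorem minDimGe_le_iff (hf : Monotone f) {r : ℤ} (hr : r ≤ f ⊤) {y : ℕ}
    (hy : y ≤ finrank K V) : minDimGe f r ≤ y ↔ r ≤ maxOfDim f y := by
  rw [le_maxOfDim_iff hf hy]
  constructor
  · intro h
    obtain ⟨X, hX, hrX⟩ : ∃ X : Submodule K V, finrank K X = minDimGe f r ∧ r ≤ f X :=
      Nat.sInf_mem (s := {d : ℕ | ∃ X : Submodule K V, finrank K X = d ∧ r ≤ f X})
        ⟨_, ⊤, rfl, hr⟩
    obtain ⟨Y, hXY, hY⟩ := X.exists_le_finrank_eq (hX ▸ h) hy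
    exact ⟨Y, hY, hrX.trans (hf hXY)⟩
  · rintro ⟨X, hX, hrX⟩
    exact Nat.sInf_le ⟨X, hX, hrX⟩

theorem eq_minDimGe_iff (hf : Monotone f) {r : ℤ} (hr : r ≤ f ⊤) {x : ℕ} (hx1 : 1 ≤ x)
    (hx : x ≤ finrank K V) :
    x = minDimGe f r ↔ maxOfDim f (x - 1) < r ∧ r ≤ maxOfDim f x := by
  rw [← minDimGe_le_iff hf hr hx, lt_iff_not_ge, ← minDimGe_le_iff hf hr (by omega)]
  omega

end GradedExtrema

theorem perp_eq_orthogonal (X : Submodule F (Fin n → F)) :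
    perp X = LinearMap.BilinForm.orthogonal (dotProductBilin F F) X := by
  ext x
  simp only [LinearMap.BilinForm.mem_orthogonal_iff, dotProductBilin_apply_apply,
    dotProduct_comm _ x]
  rfl

theorem dotProductBilin_isRefl :
    LinearMap.IsRefl (dotProductBilin F F : LinearMap.BilinForm F (Fin n → F)) :=
  fun x y h => by
    rw [dotProductBilin_apply_apply] at h ⊢
    rwa [dotProduct_comm]

theorem dotProductBilin_nondegenerate :
    (dotProductBilin F F : LinearMap.BilinForm F (Fin n → F)).Nondegenerate := by
  refine dotProductBilin_isRefl.nondegenerate_iff_separatingLeft.mpr fun x hx => funext fun i => ?_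
  simpa using hx (Pi.single i 1)

theorem finrank_perp (X : Submodule F (Fin n → F)) :
    finrank F (perp X) = n - finrank F X := by
  rw [perp_eq_orthogonal, LinearMap.BilinForm.finrank_orthogonal dotProductBilin_nondegenerate,
    finrank_fin_fun]

theorem perp_perp (X : Submodule F (Fin n → F)) : perp (perp X) = X := by
  rw [perp_eq_orthogonal, perp_eq_orthogonal,
    LinearMap.BilinForm.orthogonal_orthogonal dotProductBilin_nondegenerate
      (dotProductBilin_isRefl (F := F) (n := n))]

theorem perp_top : perp (⊤ : Submodule F (Fin n → F)) = ⊥ := by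
  rw [← Submodule.finrank_eq_zero, finrank_perp, finrank_top, finrank_fin_fun, Nat.sub_self]

theorem perp_anti {X Y : Submodule F (Fin n → F)} (h : X ≤ Y) : perp Y ≤ perp X :=
  fun _ hx y hy => hx y (h hy)

namespace QMPolymatroid

variable {m : ℕ} (P : QMPolymatroid F n m)

theorem rho_bot : P.rho ⊥ = 0 :=
  le_antisymm (by simpa using P.rho_le ⊥) (P.rho_nonneg ⊥)

theorem coNull_monotone : Monotone (coNull P.rho) := fun _ _ h => by
  have := P.rho_mono (perp_anti h)
  unfold coNull
  omega

/-- With `U` a complement of `X` inside `Y`, submodularity gives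
`ρ(Y) ≤ ρ(X) + ρ(U) ≤ ρ(X) + m·dim U`. -/
theorem nullity_monotone : Monotone (nullity m P.rho) := by
  intro X Y hXY
  obtain ⟨W, hW⟩ := Submodule.exists_isCompl X
  have hsup : X ⊔ W ⊓ Y = Y := by rw [← sup_inf_assoc_of_le W hXY, hW.sup_eq_top, top_inf_eq]
  have hinf : X ⊓ (W ⊓ Y) = ⊥ := (hW.disjoint.mono_right inf_le_left).eq_bot
  have hdim := Submodule.finrank_sup_add_finrank_inf_eq X (W ⊓ Y)
  have hsub := P.rho_submodular X (W ⊓ Y)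
  rw [hsup, hinf, finrank_bot, add_zero] at hdim
  rw [hsup, hinf, P.rho_bot] at hsub
  have hU := P.rho_le (W ⊓ Y)
  unfold nullity
  rw [hdim]
  push_cast
  linarith

theorem coNull_top : coNull P.rho ⊤ = P.rho ⊤ := by
  rw [coNull, perp_top, P.rho_bot, sub_zero]

theorem coNull_dualRho : coNull (dualRho m P.rho) = nullity m P.rho := by
  funext X
  have hX := Submodule.finrank_le X
  rw [finrank_fin_fun] at hX
  rw [coNull, dualRho, dualRho, nullity, perp_top, perp_perp, finrank_perp, P.rho_bot,
    finrank_top, finrank_fin_fun, Nat.cast_sub hX]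
  ring

end QMPolymatroid

theorem nullity_top {m : ℕ} (rho : Submodule F (Fin n → F) → ℤ) :
    nullity m rho ⊤ = m * n - rho ⊤ := by
  rw [nullity, finrank_top, finrank_fin_fun]

/-- characterization of the generalized weights of `P` and of its dual `P*`
in terms of the functions `h` and `h*`. -/
theorem genW_iff_hStar {F : Type*} [Field F] [Fintype F] {n m : ℕ}
    (P : QMPolymatroid F n m) (x : ℕ) (hx1 : 1 ≤ x) (hxn : x ≤ n) :
    (hStar P.rho (x - 1) ≤ hStar P.rho x ∧
      ∀ r : ℤ, 1 ≤ r → r ≤ P.rho ⊤ →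
        ((x = genW P.rho r) ↔ (hStar P.rho (x - 1) < r ∧ r ≤ hStar P.rho x))) ∧
    (hFun m P.rho (x - 1) ≤ hFun m P.rho x ∧
      ∀ s : ℤ, 1 ≤ s → s ≤ (m : ℤ) * (n : ℤ) - P.rho ⊤ →
        ((x = genW (dualRho m P.rho) s) ↔ (hFun m P.rho (x - 1) < s ∧ s ≤ hFun m P.rho x))) := by
  have hx : x ≤ finrank F (Fin n → F) := by rwa [finrank_fin_fun]
  refine ⟨⟨maxOfDim_mono P.coNull_monotone (Nat.sub_le x 1) hx, fun r _ hr => ?_⟩,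
    ⟨maxOfDim_mono P.nullity_monotone (Nat.sub_le x 1) hx, fun s _ hs => ?_⟩⟩
  · exact eq_minDimGe_iff P.coNull_monotone (by rwa [P.coNull_top]) hx1 hx
  · rw [genW, P.coNull_dualRho]
    exact eq_minDimGe_iff P.nullity_monotone (by rwa [nullity_top]) hx1 hx
end

section
/- Let F = (C₁, …, C_s) be a flag of Delsarte codes in the space of m×n matrices over 𝔽_q, and let ρ_F be the rank function associated to F, that is, ρ_F(X) = Σ_{i=1}^{s} (−1)^{i+1} ρ_{C_i}(X) for X ∈ Σ(E). Then P(F) = (E, ρ_F) is a (q,m)-demi-polymatroid. -/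
/-!
Put `δ(X) = Σᵢ (-1)ⁱ dim Cᵢ(X)`. Then `ρ_F(X) = δ(E) − δ(X^⊥)` and, since `X^⊥⊥ = X`,
`ρ_F*(X) = m·dim X − δ(X)`, so every axiom of a demi-polymatroid reduces to
`0 ≤ δ(Y) − δ(X) ≤ m·(dim Y − dim X)` for `X ≤ Y`. By the modular law the increments
`dim Cᵢ(Y) − dim Cᵢ(X)` decrease along the flag; they are nonnegative and bounded by the increment
`m·(dim Y − dim X)` of the full matrix space, and an alternating sum of a decreasing nonnegative
sequence lies between `0` and its first term.
-/

set_option linter.unusedSectionVars false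

open Module Matrix

variable {F : Type*} [Field F] [Fintype F] {n : ℕ}

theorem alternating_sum_mem_Icc_of_antitone {R : Type*} [Ring R] [PartialOrder R]
    [IsOrderedRing R] {s : ℕ} {g : Fin s → R} (hg : Antitone g) (hg0 : 0 ≤ g) {B : R}
    (hB : 0 ≤ B) (hgB : ∀ i, g i ≤ B) : ∑ i : Fin s, (-1) ^ (i : ℕ) * g i ∈ Set.Icc 0 B := by
  induction s generalizing B with
  | zero => simpa using hB
  | succ s ih =>
    obtain ⟨h0, hle⟩ := ih (B := g 0) (hg.comp_monotone (Fin.strictMono_succ.monotone))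
      (fun i => hg0 i.succ) (hg0 0) (fun i => hg (Fin.zero_le i.succ))
    have h1 : ∑ i : Fin (s + 1), (-1) ^ (i : ℕ) * g i
        = g 0 - ∑ i : Fin s, (-1) ^ (i : ℕ) * g i.succ := by
      simp [Fin.sum_univ_succ, pow_succ, Finset.sum_neg_distrib, sub_eq_add_neg]
    rw [h1]
    exact ⟨sub_nonneg.mpr hle, (sub_le_self _ h0).trans (hgB 0)⟩

theorem finrank_inf_sub_finrank_inf_le {K V : Type*} [DivisionRing K] [AddCommGroup V]
    [Module K V] [FiniteDimensional K V] {C' C W' W : Submodule K V} (hC : C' ≤ C)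
    (hW : W' ≤ W) :
    (finrank K ↥(C' ⊓ W) : ℤ) - finrank K ↥(C' ⊓ W') ≤
      (finrank K ↥(C ⊓ W) : ℤ) - finrank K ↥(C ⊓ W') := by
  have hinf : (C ⊓ W') ⊓ (C' ⊓ W) = C' ⊓ W' := by
    rw [inf_inf_inf_comm, inf_eq_right.mpr hC, inf_eq_left.mpr hW]
  have hsup : (C ⊓ W') ⊔ (C' ⊓ W) ≤ C ⊓ W :=
    sup_le (inf_le_inf_left C hW) (inf_le_inf_right W hC)
  have h1 := Submodule.finrank_sup_add_finrank_inf_eq (C ⊓ W') (C' ⊓ W)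
  rw [hinf] at h1
  have h2 := Submodule.finrank_mono hsup
  omega

theorem perp_eq_comap_dualAnnihilator (X : Submodule F (Fin n → F)) :
    perp X = X.dualAnnihilator.comap (dotProductEquiv F (Fin n)).toLinearMap := by
  ext x
  simp [perp, Submodule.mem_dualAnnihilator]

theorem finrank_perp_add_finrank (X : Submodule F (Fin n → F)) :
    finrank F (perp X) + finrank F X = n := by
  rw [perp_eq_comap_dualAnnihilator, Submodule.comap_equiv_eq_map_symm,
    LinearEquiv.finrank_map_eq, add_comm, Subspace.finrank_add_finrank_dualAnnihilator_eq,
    finrank_fin_fun]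

theorem perp_antitone : Antitone (perp : Submodule F (Fin n → F) → Submodule F (Fin n → F)) :=
  fun _ _ hXY _ hx y hy => hx y (hXY hy)

section Subcodes

variable {m : ℕ}

theorem supportedOn_mono :
    Monotone (supportedOn m : Submodule F (Fin n → F) → Submodule F (Matrix (Fin m) (Fin n) F)) :=
  fun _ _ hXY _ hA => hA.trans hXY

theorem supportedOn_top : supportedOn m (⊤ : Submodule F (Fin n → F)) = ⊤ :=
  eq_top_iff.mpr fun A _ => show rowSpace A ≤ ⊤ from le_top

theorem supportedOn_bot : supportedOn m (⊥ : Submodule F (Fin n → F)) = ⊥ :=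
  eq_bot_iff.mpr fun A hA =>
    funext fun i => (Submodule.mem_bot F).mp ((rowSpace_le_iff A ⊥).mp hA i)

noncomputable def supportedOnEquivPi (X : Submodule F (Fin n → F)) :
    supportedOn m X ≃ₗ[F] (Fin m → X) where
  toFun A i := ⟨A.1 i, (rowSpace_le_iff A.1 X).mp A.2 i⟩
  map_add' _ _ := rfl
  map_smul' _ _ := rfl
  invFun f := ⟨fun i => f i, (rowSpace_le_iff _ X).mpr fun i => (f i).2⟩
  left_inv _ := rfl
  right_inv _ := rfl

theorem finrank_supportedOn (X : Submodule F (Fin n → F)) :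
    finrank F (supportedOn m X) = m * finrank F X := by
  rw [(supportedOnEquivPi X).finrank_eq, finrank_pi_fintype, Finset.sum_const,
    Finset.card_univ, Fintype.card_fin, smul_eq_mul]

theorem finrank_subcode_top (C : Submodule F (Matrix (Fin m) (Fin n) F)) :
    finrank F (subcode C ⊤) = finrank F C := by
  rw [subcode, supportedOn_top, inf_top_eq]

theorem finrank_subcode_bot (C : Submodule F (Matrix (Fin m) (Fin n) F)) :
    finrank F (subcode C ⊥) = 0 := by
  rw [subcode, supportedOn_bot, inf_bot_eq, finrank_bot]

theorem finrank_subcode_mono (C : Submodule F (Matrix (Fin m) (Fin n) F))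
    {X Y : Submodule F (Fin n → F)} (hXY : X ≤ Y) :
    finrank F (subcode C X) ≤ finrank F (subcode C Y) :=
  Submodule.finrank_mono (inf_le_inf_left C (supportedOn_mono hXY))

theorem finrank_subcode_sub_le_of_le {C' C : Submodule F (Matrix (Fin m) (Fin n) F)}
    (hC : C' ≤ C) {X Y : Submodule F (Fin n → F)} (hXY : X ≤ Y) :
    (finrank F (subcode C' Y) : ℤ) - finrank F (subcode C' X) ≤
      (finrank F (subcode C Y) : ℤ) - finrank F (subcode C X) :=
  finrank_inf_sub_finrank_inf_le hC (supportedOn_mono hXY)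

theorem finrank_subcode_sub_le (C : Submodule F (Matrix (Fin m) (Fin n) F))
    {X Y : Submodule F (Fin n → F)} (hXY : X ≤ Y) :
    (finrank F (subcode C Y) : ℤ) - finrank F (subcode C X) ≤
      (m : ℤ) * ((finrank F Y : ℤ) - finrank F X) := by
  have h := finrank_subcode_sub_le_of_le (le_top : C ≤ ⊤) hXY
  have hTop (Z : Submodule F (Fin n → F)) : subcode ⊤ Z = supportedOn m Z := top_inf_eq _
  rwa [hTop, hTop, finrank_supportedOn, finrank_supportedOn, Nat.cast_mul, Nat.cast_mul,
    ← mul_sub] at h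

end Subcodes

section Flags

variable {m s : ℕ} (C : Fin s → Submodule F (Matrix (Fin m) (Fin n) F))

noncomputable def flagDim (X : Submodule F (Fin n → F)) : ℤ :=
  ∑ i : Fin s, (-1 : ℤ) ^ (i : ℕ) * finrank F (subcode (C i) X)

theorem flagDim_bot : flagDim C ⊥ = 0 := by
  simp [flagDim, finrank_subcode_bot]

theorem flagDim_sub_mem_Icc (hC : Antitone C) {X Y : Submodule F (Fin n → F)} (hXY : X ≤ Y) :
    flagDim C Y - flagDim C X ∈ Set.Icc 0 ((m : ℤ) * ((finrank F Y : ℤ) - finrank F X)) := by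
  rw [flagDim, flagDim, ← Finset.sum_sub_distrib]
  simp_rw [← mul_sub]
  refine alternating_sum_mem_Icc_of_antitone (fun i j hij => ?_) (fun i => ?_) ?_
    (fun i => finrank_subcode_sub_le (C i) hXY)
  · exact finrank_subcode_sub_le_of_le (hC hij) hXY
  · exact sub_nonneg.mpr (Nat.cast_le.mpr (finrank_subcode_mono (C i) hXY))
  · exact mul_nonneg (Nat.cast_nonneg m)
      (sub_nonneg.mpr (Nat.cast_le.mpr (Submodule.finrank_mono hXY)))

theorem flagDim_mem_Icc (hC : Antitone C) (X : Submodule F (Fin n → F)) :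
    flagDim C X ∈ Set.Icc 0 ((m : ℤ) * finrank F X) := by
  simpa [flagDim_bot] using flagDim_sub_mem_Icc C hC (bot_le : ⊥ ≤ X)

theorem flagDim_top_sub_flagDim_perp_le (hC : Antitone C) (X : Submodule F (Fin n → F)) :
    flagDim C ⊤ - flagDim C (perp X) ≤ (m : ℤ) * finrank F X := by
  have hdim : (finrank F (perp X) : ℤ) + finrank F X = n := mod_cast finrank_perp_add_finrank X
  have h := (flagDim_sub_mem_Icc C hC (le_top : perp X ≤ ⊤)).2
  rwa [finrank_top, finrank_fin_fun, ← hdim, add_sub_cancel_left] at h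

theorem sum_rhoC_eq_flagDim (X : Submodule F (Fin n → F)) :
    ∑ i : Fin s, (-1 : ℤ) ^ (i : ℕ) * rhoC (C i) X = flagDim C ⊤ - flagDim C (perp X) := by
  simp_rw [flagDim, ← Finset.sum_sub_distrib, ← mul_sub, rhoC, finrank_subcode_top]

theorem dualRho_sum_rhoC (X : Submodule F (Fin n → F)) :
    dualRho m (fun Z => ∑ i : Fin s, (-1 : ℤ) ^ (i : ℕ) * rhoC (C i) Z) X =
      m * finrank F X - flagDim C X := by
  simp only [dualRho, sum_rhoC_eq_flagDim, perp_perp, perp_top, flagDim_bot]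
  ring

end Flags

/-- the rank function `ρ_F(X) = Σ (−1)^{i+1} ρ_{C_i}(X)` of a flag
`C_s ⊆ ⋯ ⊆ C₁` of Delsarte codes defines a `(q,m)`-demi-polymatroid. -/
theorem flag_is_demi {F : Type*} [Field F] [Fintype F] {n m s : ℕ}
    (C : Fin s → Submodule F (Matrix (Fin m) (Fin n) F))
    (hC : ∀ i j : Fin s, i ≤ j → C j ≤ C i) :
    ∃ D : QMDemiPolymatroid F n m,
      ∀ X : Submodule F (Fin n → F),
        D.rho X = ∑ i : Fin s, (-1 : ℤ) ^ (i : ℕ) * rhoC (C i) X := by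
  refine ⟨⟨fun X => ∑ i : Fin s, (-1 : ℤ) ^ (i : ℕ) * rhoC (C i) X, fun X => ?_, fun X => ?_,
    fun X Y hXY => ?_, fun X => ?_, fun X => ?_, fun X Y hXY => ?_⟩, fun _ => rfl⟩ <;>
    simp only [↓dualRho_sum_rhoC, sum_rhoC_eq_flagDim]
  · exact (flagDim_sub_mem_Icc C hC le_top).1
  · exact flagDim_top_sub_flagDim_perp_le C hC X
  · linarith [(flagDim_sub_mem_Icc C hC (perp_antitone hXY)).1]
  · exact sub_nonneg.mpr (flagDim_mem_Icc C hC X).2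
  · exact sub_le_self _ (flagDim_mem_Icc C hC X).1
  · linarith [(flagDim_sub_mem_Icc C hC hXY).2]
end
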